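/- arXiv:1912.03674 — 2 statements merged into one kernel-verified Lean document; each statement's English description precedes it below -/
import Mathlib

section
/- For every integer n ≥ 1 and every pattern pair p ∈ {(001,010), (001,011), (001,012)}, the number of inversion sequences of length n avoiding both patterns of p equals n, i.e. |I_n(p)| = n. -/
/-- An inversion sequence of length `n` (0-indexed): `e i ≤ i` for all `i`. -/
def InvSeq {n : ℕ} (e : Fin n → ℕ) : Prop := ∀ i : Fin n, e i ≤ (i : ℕ)

/-- `e` contains the pattern `p` (a word of nonnegative integers): there is a
strictly increasing choice of positions on which `e` is order-isomorphic to `p`. -/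
def Contains {n : ℕ} (e : Fin n → ℕ) (p : List ℕ) : Prop :=
  ∃ s : Fin p.length → Fin n, StrictMono s ∧
    ∀ a b : Fin p.length,
      (p.get a < p.get b ↔ e (s a) < e (s b)) ∧
      (p.get a = p.get b ↔ e (s a) = e (s b))

/-- `e` avoids the pattern `p`. -/
def Avoids {n : ℕ} (e : Fin n → ℕ) (p : List ℕ) : Prop := ¬ Contains e p

/-- The number of zero entries of `e`. -/
def zeroStat {n : ℕ} (e : Fin n → ℕ) : ℕ :=
  (Finset.univ.filter (fun i : Fin n => e i = 0)).card

/-- The number of distinct positive values among the entries of `e`. -/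
def distStat {n : ℕ} (e : Fin n → ℕ) : ℕ :=
  ((Finset.univ.image e).filter (fun v => 0 < v)).card

/-- The number of repeated entries of `e`: `n - dist e`. -/
def repStat {n : ℕ} (e : Fin n → ℕ) : ℕ := n - distStat e

/-- The number of saturated entries of `e` (1-indexed: `e_i = i - 1`). -/
def satuStat {n : ℕ} (e : Fin n → ℕ) : ℕ :=
  (Finset.univ.filter (fun i : Fin n => e i = (i : ℕ))).card

/-! Avoiding `001` together with one of `010`, `011`, `012` forces a rigid shape, parametrised
by a single `m < n`: respectively `0, 1, …, m, m, …, m`, then `0, 1, …, m, 0, …, 0`, and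
`0, 1, …, 1, 0, …, 0` with ones exactly at positions `1, …, m`. Any deviation from the shape
yields, together with position `0`, an extremal entry or an earlier entry of the prefix already
known to have the shape, an occurrence of one of the two patterns. Conversely every such sequence
avoids both patterns, so `m ↦ shape` is a bijection from `Fin n`. -/

theorem Nat.card_subtype_eq_of_injective {α : Type*} {P : α → Prop} {n : ℕ} {f : Fin n → α}
    (hf : Function.Injective f) (hP : ∀ x, P x ↔ ∃ m, f m = x) : Nat.card {x // P x} = n := by
  rw [← Nat.card_fin n, ← Nat.card_range_of_injective hf]
  exact Nat.card_congr (Equiv.subtypeEquivRight hP)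

theorem Fin.exists_val_eq {n k : ℕ} (hk : k < n) : ∃ v : Fin n, (v : ℕ) = k := ⟨⟨k, hk⟩, rfl⟩

theorem compares_compare_iff {α β : Type*} [LinearOrder α] [LinearOrder β] {x y : α}
    {x' y' : β} : (compare x y).Compares x' y' ↔ (x < y ↔ x' < y') ∧ (x = y ↔ x' = y') := by
  rw [← compare_iff, ← compare_lt_iff_lt (a := x), ← compare_lt_iff_lt (a := x'),
    ← compare_eq_iff_eq (a := x), ← compare_eq_iff_eq (a := x')]
  cases compare x y <;> cases compare x' y' <;> simp

section
variable {n : ℕ}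

theorem contains_iff_compares (e : Fin n → ℕ) (p : List ℕ) :
    Contains e p ↔ ∃ s : Fin p.length → Fin n, StrictMono s ∧
      ∀ a b, (compare (p.get a) (p.get b)).Compares (e (s a)) (e (s b)) := by
  simp only [Contains, compares_compare_iff]

theorem contains_triple_iff (e : Fin n → ℕ) (a b c : ℕ) :
    Contains e [a, b, c] ↔ ∃ i j k : Fin n, i < j ∧ j < k ∧
      (compare a b).Compares (e i) (e j) ∧ (compare b c).Compares (e j) (e k) ∧
      (compare a c).Compares (e i) (e k) := by
  rw [contains_iff_compares]
  constructor
  · rintro ⟨s, hs, h⟩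
    exact ⟨s 0, s 1, s 2, hs Fin.zero_lt_one, hs (by simp [Fin.lt_def]), h 0 1, h 1 2, h 0 2⟩
  · rintro ⟨i, j, k, hij, hjk, hab, hbc, hac⟩
    have swap {x y x' y' : ℕ} (h : (compare x y).Compares x' y') :
        (compare y x).Compares y' x' := by
      rwa [← Nat.compare_swap, Ordering.compares_swap]
    refine ⟨![i, j, k], Fin.strictMono_iff_lt_succ.2 fun t => ?_, fun t u => ?_⟩
    · fin_cases t <;> simpa
    · fin_cases t <;> fin_cases u <;> simp [hab, hbc, hac, swap hab, swap hbc, swap hac]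

theorem contains_001_iff (e : Fin n → ℕ) :
    Contains e [0, 0, 1] ↔ ∃ i j k, i < j ∧ j < k ∧ e i = e j ∧ e j < e k := by
  simp only [contains_triple_iff, Nat.compare_eq_ite_lt, Ordering.Compares]
  grind

theorem contains_010_iff (e : Fin n → ℕ) :
    Contains e [0, 1, 0] ↔ ∃ i j k, i < j ∧ j < k ∧ e i < e j ∧ e i = e k := by
  simp only [contains_triple_iff, Nat.compare_eq_ite_lt, Ordering.Compares]
  grind

theorem contains_011_iff (e : Fin n → ℕ) :
    Contains e [0, 1, 1] ↔ ∃ i j k, i < j ∧ j < k ∧ e i < e j ∧ e j = e k := by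
  simp only [contains_triple_iff, Nat.compare_eq_ite_lt, Ordering.Compares]
  grind

theorem contains_012_iff (e : Fin n → ℕ) :
    Contains e [0, 1, 2] ↔ ∃ i j k, i < j ∧ j < k ∧ e i < e j ∧ e j < e k := by
  simp only [contains_triple_iff, Nat.compare_eq_ite_lt, Ordering.Compares]
  grind

theorem InvSeq.exists_eq_min_of_avoids_001_010 {e : Fin n → ℕ} (he : InvSeq e)
    (h001 : Avoids e [0, 0, 1]) (h010 : Avoids e [0, 1, 0]) (hn : 0 < n) :
    ∃ m : Fin n, ∀ i, e i = min (i : ℕ) m := by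
  have : Nonempty (Fin n) := ⟨⟨0, hn⟩⟩
  obtain ⟨a, ha⟩ := Finite.exists_max e
  obtain ⟨m, hm⟩ := Fin.exists_val_eq ((he a).trans_lt a.isLt)
  have low (i : Fin n) : (i : ℕ) ≤ m → e i = i := by
    induction i using WellFoundedLT.induction with | _ i ih => ?_
    intro hi
    by_contra hne
    have hlt : e i < i := (he i).lt_of_ne hne
    obtain ⟨v, hv⟩ := Fin.exists_val_eq (hlt.trans i.isLt)
    have hia : i ≠ a := by rintro rfl; omega
    have hev : e v = v := ih v (by omega) (by omega)
    have := he a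
    exact h001 ((contains_001_iff e).2 ⟨v, i, a, by omega, by omega, by omega, by omega⟩)
  have high (i : Fin n) : (m : ℕ) ≤ i → e i = m := by
    intro hi
    by_contra hne
    have hlt : e i < m := by have := ha i; omega
    obtain ⟨v, hv⟩ := Fin.exists_val_eq (hlt.trans m.isLt)
    have hem : e m = m := low m le_rfl
    have hmi : m ≠ i := by rintro rfl; omega
    have hev : e v = v := low v (by omega)
    exact h010 ((contains_010_iff e).2 ⟨v, m, i, by omega, by omega, by omega, by omega⟩)
  refine ⟨m, fun i => ?_⟩
  rcases le_total (i : ℕ) m with h | h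
  · rw [low i h, min_eq_left h]
  · rw [high i h, min_eq_right h]

theorem InvSeq.eq_zero_or_eq_self_of_avoids_001_011 {e : Fin n → ℕ} (he : InvSeq e)
    (h001 : Avoids e [0, 0, 1]) (h011 : Avoids e [0, 1, 1]) (i : Fin n) : e i = 0 ∨ e i = i := by
  induction i using WellFoundedLT.induction with | _ i ih => ?_
  by_contra! hne
  have hlt : e i < i := (he i).lt_of_ne hne.2
  obtain ⟨v, hv⟩ := Fin.exists_val_eq (hlt.trans i.isLt)
  obtain ⟨z, hz⟩ := Fin.exists_val_eq i.pos
  have hez : e z = 0 := by have := he z; omega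
  rcases ih v (by omega) with h | h
  · exact h001 ((contains_001_iff e).2 ⟨z, v, i, by omega, by omega, by omega, by omega⟩)
  · exact h011 ((contains_011_iff e).2 ⟨z, v, i, by omega, by omega, by omega, by omega⟩)

theorem InvSeq.exists_eq_ite_of_avoids_001_011 {e : Fin n → ℕ} (he : InvSeq e)
    (h001 : Avoids e [0, 0, 1]) (h011 : Avoids e [0, 1, 1]) (hn : 0 < n) :
    ∃ m : Fin n, ∀ i, e i = if (i : ℕ) ≤ m then (i : ℕ) else 0 := by
  have : Nonempty (Fin n) := ⟨⟨0, hn⟩⟩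
  obtain ⟨a, ha⟩ := Finite.exists_max e
  obtain ⟨m, hm⟩ := Fin.exists_val_eq ((he a).trans_lt a.isLt)
  obtain ⟨z, hz⟩ := Fin.exists_val_eq hn
  have hez : e z = 0 := by have := he z; omega
  refine ⟨m, fun i => ?_⟩
  rcases he.eq_zero_or_eq_self_of_avoids_001_011 h001 h011 i with h | h
  · split_ifs with him
    · by_contra hi
      have hia : i ≠ a := by rintro rfl; omega
      have := he a
      exact h001 ((contains_001_iff e).2 ⟨z, i, a, by omega, by omega, by omega, by omega⟩)
    · exact h
  · have := ha i
    split_ifs <;> omega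

theorem InvSeq.le_one_of_avoids_001_012 {e : Fin n → ℕ} (he : InvSeq e)
    (h001 : Avoids e [0, 0, 1]) (h012 : Avoids e [0, 1, 2]) (i : Fin n) : e i ≤ 1 := by
  by_contra! hi
  have := he i
  obtain ⟨z, hz⟩ := Fin.exists_val_eq i.pos
  obtain ⟨o, ho⟩ := Fin.exists_val_eq (show 1 < n by omega)
  have hez : e z = 0 := by have := he z; omega
  have := he o
  by_cases heo : e o = 0
  · exact h001 ((contains_001_iff e).2 ⟨z, o, i, by omega, by omega, by omega, by omega⟩)
  · exact h012 ((contains_012_iff e).2 ⟨z, o, i, by omega, by omega, by omega, by omega⟩)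

theorem InvSeq.exists_eq_ite_of_avoids_001_012 {e : Fin n → ℕ} (he : InvSeq e)
    (h001 : Avoids e [0, 0, 1]) (h012 : Avoids e [0, 1, 2]) (hn : 0 < n) :
    ∃ m : Fin n, ∀ i, e i = if 1 ≤ (i : ℕ) ∧ (i : ℕ) ≤ m then 1 else 0 := by
  have : Nonempty (Fin n) := ⟨⟨0, hn⟩⟩
  -- `m` is the last position holding a `1`, or `0` if there is none.
  obtain ⟨a, ha⟩ := Finite.exists_max fun i : Fin n => if e i = 0 then 0 else (i : ℕ)
  obtain ⟨m, hm⟩ := Fin.exists_val_eq (show (if e a = 0 then 0 else (a : ℕ)) < n by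
    split_ifs <;> omega)
  obtain ⟨z, hz⟩ := Fin.exists_val_eq hn
  have hez : e z = 0 := by have := he z; omega
  refine ⟨m, fun i => ?_⟩
  have hi := ha i
  have := he i
  have := he.le_one_of_avoids_001_012 h001 h012 i
  have := he.le_one_of_avoids_001_012 h001 h012 a
  split_ifs at hi hm ⊢ <;> try omega
  have hia : i ≠ a := by rintro rfl; omega
  exact (h001 ((contains_001_iff e).2 ⟨z, i, a, by omega, by omega, by omega, by omega⟩)).elim

theorem invSeq_avoids_001_010_iff (hn : 0 < n) (e : Fin n → ℕ) :
    InvSeq e ∧ Avoids e [0, 0, 1] ∧ Avoids e [0, 1, 0] ↔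
      ∃ m : Fin n, (fun i : Fin n => min (i : ℕ) m) = e := by
  constructor
  · rintro ⟨he, h001, h010⟩
    obtain ⟨m, hm⟩ := he.exists_eq_min_of_avoids_001_010 h001 h010 hn
    exact ⟨m, funext fun i => (hm i).symm⟩
  · rintro ⟨m, rfl⟩
    refine ⟨fun i => min_le_left _ _, ?_, ?_⟩
    · rw [Avoids, contains_001_iff]; rintro ⟨i, j, k, _, _, _⟩; omega
    · rw [Avoids, contains_010_iff]; rintro ⟨i, j, k, _, _, _⟩; omega

theorem invSeq_avoids_001_011_iff (hn : 0 < n) (e : Fin n → ℕ) :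
    InvSeq e ∧ Avoids e [0, 0, 1] ∧ Avoids e [0, 1, 1] ↔
      ∃ m : Fin n, (fun i : Fin n => if (i : ℕ) ≤ m then (i : ℕ) else 0) = e := by
  constructor
  · rintro ⟨he, h001, h011⟩
    obtain ⟨m, hm⟩ := he.exists_eq_ite_of_avoids_001_011 h001 h011 hn
    exact ⟨m, funext fun i => (hm i).symm⟩
  · rintro ⟨m, rfl⟩
    refine ⟨fun i => by dsimp only; split_ifs <;> omega, ?_, ?_⟩
    · rw [Avoids, contains_001_iff]
      rintro ⟨i, j, k, _, _, h⟩
      split_ifs at h <;> omega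
    · rw [Avoids, contains_011_iff]
      rintro ⟨i, j, k, _, _, h⟩
      split_ifs at h <;> omega

theorem invSeq_avoids_001_012_iff (hn : 0 < n) (e : Fin n → ℕ) :
    InvSeq e ∧ Avoids e [0, 0, 1] ∧ Avoids e [0, 1, 2] ↔
      ∃ m : Fin n, (fun i : Fin n => if 1 ≤ (i : ℕ) ∧ (i : ℕ) ≤ m then 1 else 0) = e := by
  constructor
  · rintro ⟨he, h001, h012⟩
    obtain ⟨m, hm⟩ := he.exists_eq_ite_of_avoids_001_012 h001 h012 hn
    exact ⟨m, funext fun i => (hm i).symm⟩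
  · rintro ⟨m, rfl⟩
    refine ⟨fun i => by dsimp only; split_ifs <;> omega, ?_, ?_⟩
    · rw [Avoids, contains_001_iff]
      rintro ⟨i, j, k, _, _, h⟩
      split_ifs at h <;> omega
    · rw [Avoids, contains_012_iff]
      rintro ⟨i, j, k, _, _, h⟩
      split_ifs at h <;> omega

theorem card_invSeq_avoids_001_010 (hn : 0 < n) :
    Nat.card {e : Fin n → ℕ // InvSeq e ∧ Avoids e [0, 0, 1] ∧ Avoids e [0, 1, 0]} = n := by
  refine Nat.card_subtype_eq_of_injective (fun a b h => ?_) (invSeq_avoids_001_010_iff hn)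
  have := congrFun h a
  have := congrFun h b
  omega

theorem card_invSeq_avoids_001_011 (hn : 0 < n) :
    Nat.card {e : Fin n → ℕ // InvSeq e ∧ Avoids e [0, 0, 1] ∧ Avoids e [0, 1, 1]} = n := by
  refine Nat.card_subtype_eq_of_injective (fun a b h => ?_) (invSeq_avoids_001_011_iff hn)
  have := congrFun h a
  have := congrFun h b
  split_ifs at * <;> omega

theorem card_invSeq_avoids_001_012 (hn : 0 < n) :
    Nat.card {e : Fin n → ℕ // InvSeq e ∧ Avoids e [0, 0, 1] ∧ Avoids e [0, 1, 2]} = n := by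
  refine Nat.card_subtype_eq_of_injective (fun a b h => ?_) (invSeq_avoids_001_012_iff hn)
  have := congrFun h a
  have := congrFun h b
  split_ifs at * <;> omega

end

theorem stmt_0 (n : ℕ) (hn : 1 ≤ n) (p q : List ℕ)
    (hpq : (p, q) = ([0,0,1], [0,1,0]) ∨ (p, q) = ([0,0,1], [0,1,1]) ∨
           (p, q) = ([0,0,1], [0,1,2])) :
    Nat.card {e : Fin n → ℕ // InvSeq e ∧ Avoids e p ∧ Avoids e q} = n := by
  rcases hpq with h | h | h <;> obtain ⟨rfl, rfl⟩ := Prod.mk.inj h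
  exacts [card_invSeq_avoids_001_010 hn, card_invSeq_avoids_001_011 hn,
    card_invSeq_avoids_001_012 hn]
end

section
/- For every integer n ≥ 1 and every pattern pair p ∈ {(001,110), (001,021), (001,120)}, the number of inversion sequences of length n avoiding both patterns of p equals the n-th central polygonal (lazy caterer) number: |I_n(p)| = n(n−1)/2 + 1. -/
/-!
An inversion sequence avoiding `001` agrees with the identity on an initial segment
`0, 1, …, m - 1`. Every later entry repeats a value of that segment, and once a value `v` has
been repeated all later entries are at most `v`; so the tail is bounded by its first entry.
The second pattern pins the tail down: against `110` it is constant, against `021` (resp. `120`)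
it takes only the values `m - 1` and then `0` (resp. `m - 2`). The sequences counted are thus
`0, 1, …, k, k, …, k, c, …, c`, injectively parametrized by the pairs `y < x < n`, together with
one exceptional sequence (the identity, resp. the zero sequence): `n(n-1)/2 + 1` in all.
-/

theorem natCard_eq_triangle_add_one {α : Type*} {n : ℕ} {P : α → Prop} (z : α)
    (F : ℕ → ℕ → α) (hP : ∀ a, P a ↔ a = z ∨ ∃ x < n, ∃ y < x, F x y = a)
    (hz : ∀ x < n, ∀ y < x, F x y ≠ z)
    (hF : ∀ x < n, ∀ y < x, ∀ x' < n, ∀ y' < x', F x y = F x' y' → x = x' ∧ y = y') :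
    Nat.card {a // P a} = n * (n - 1) / 2 + 1 := by
  classical
  let T := (Finset.range n).sigma Finset.range
  have hmem : ∀ a, P a ↔ a ∈ insert z (T.image fun p => F p.1 p.2) := by
    simp [hP, T, and_assoc]
  rw [Nat.card_congr (Equiv.subtypeEquivRight hmem), Nat.card_eq_finsetCard,
    Finset.card_insert_of_notMem, Finset.card_image_of_injOn, Finset.card_sigma]
  · simp [Finset.sum_range_id]
  · rintro ⟨x, y⟩ hxy ⟨x', y'⟩ hxy' h
    simp only [Finset.coe_sigma, Set.mem_sigma_iff, Finset.coe_range, Set.mem_Iio, T] at hxy hxy'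
    obtain ⟨rfl, rfl⟩ := hF x hxy.1 y hxy.2 x' hxy'.1 y' hxy'.2 h
    rfl
  · simp only [Finset.mem_image, Finset.mem_sigma, Finset.mem_range, T]
    rintro ⟨⟨x, y⟩, ⟨hx, hy⟩, h⟩
    exact hz x hx y hy h

variable {n : ℕ} {e : Fin n → ℕ}

theorem contains_three_iff {x y z : ℕ} :
    Contains e [x, y, z] ↔
      ∃ i j k : Fin n, i < j ∧ j < k ∧
        (x < y ↔ e i < e j) ∧ (x = y ↔ e i = e j) ∧
        (x < z ↔ e i < e k) ∧ (x = z ↔ e i = e k) ∧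
        (y < z ↔ e j < e k) ∧ (y = z ↔ e j = e k) := by
  constructor
  · rintro ⟨s, hs, h⟩
    refine ⟨s 0, s 1, s 2, hs (show (0 : Fin 3) < 1 by decide),
      hs (show (1 : Fin 3) < 2 by decide), ?_⟩
    exact ⟨(h 0 1).1, (h 0 1).2, (h 0 2).1, (h 0 2).2, (h 1 2).1, (h 1 2).2⟩
  · rintro ⟨i, j, k, hij, hjk, h⟩
    refine ⟨![i, j, k], Fin.strictMono_iff_lt_succ.2 fun a => ?_, fun a b => ?_⟩
    · fin_cases a <;> assumption
    · fin_cases a <;> fin_cases b <;> dsimp <;> omega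

theorem avoids_001_iff :
    Avoids e [0,0,1] ↔ ∀ i j k, i < j → j < k → e i = e j → e k ≤ e i := by
  rw [Avoids, contains_three_iff]
  refine ⟨fun h i j k hij hjk hijk => ?_, fun h ⟨i, j, k, hij, hjk, hp⟩ => ?_⟩
  · by_contra
    exact h ⟨i, j, k, hij, hjk, by omega⟩
  · have := h i j k hij hjk
    omega

theorem avoids_110_iff :
    Avoids e [1,1,0] ↔ ∀ i j k, i < j → j < k → e i = e j → e i ≤ e k := by
  rw [Avoids, contains_three_iff]
  refine ⟨fun h i j k hij hjk hijk => ?_, fun h ⟨i, j, k, hij, hjk, hp⟩ => ?_⟩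
  · by_contra
    exact h ⟨i, j, k, hij, hjk, by omega⟩
  · have := h i j k hij hjk
    omega

theorem avoids_021_iff :
    Avoids e [0,2,1] ↔ ∀ i j k, i < j → j < k → e i < e k → e j ≤ e k := by
  rw [Avoids, contains_three_iff]
  refine ⟨fun h i j k hij hjk hijk => ?_, fun h ⟨i, j, k, hij, hjk, hp⟩ => ?_⟩
  · by_contra
    exact h ⟨i, j, k, hij, hjk, by omega⟩
  · have := h i j k hij hjk
    omega

theorem avoids_120_iff :
    Avoids e [1,2,0] ↔ ∀ i j k, i < j → j < k → e k < e i → e j ≤ e i := by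
  rw [Avoids, contains_three_iff]
  refine ⟨fun h i j k hij hjk hijk => ?_, fun h ⟨i, j, k, hij, hjk, hp⟩ => ?_⟩
  · by_contra
    exact h ⟨i, j, k, hij, hjk, by omega⟩
  · have := h i j k hij hjk
    omega

/-- The sequence `0, 1, …, k, k, …, k, c, …, c` whose drop to `c` happens at position `s`. -/
def rampSeq (n k s c : ℕ) : Fin n → ℕ := fun i => if (i : ℕ) < s then min i k else c

section rampSeq

variable {k s c : ℕ}

theorem rampSeq_invSeq (hcs : c ≤ s) : InvSeq (rampSeq n k s c) := by
  intro i
  simp only [rampSeq]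
  split_ifs <;> omega

theorem rampSeq_avoids_001 (hck : c ≤ k) : Avoids (rampSeq n k s c) [0,0,1] := by
  rw [avoids_001_iff]
  intro i j l hij hjl h
  rw [Fin.lt_def] at hij hjl
  simp only [rampSeq] at h ⊢
  split_ifs at h ⊢ <;> omega

theorem rampSeq_avoids_110 (hsk : s ≤ k + 1) : Avoids (rampSeq n k s c) [1,1,0] := by
  rw [avoids_110_iff]
  intro i j l hij hjl h
  rw [Fin.lt_def] at hij hjl
  simp only [rampSeq] at h ⊢
  split_ifs at h ⊢ <;> omega

theorem rampSeq_avoids_021 : Avoids (rampSeq n k s 0) [0,2,1] := by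
  rw [avoids_021_iff]
  intro i j l hij hjl h
  rw [Fin.lt_def] at hij hjl
  simp only [rampSeq] at h ⊢
  split_ifs at h ⊢ <;> omega

theorem rampSeq_avoids_120 (hkc : k ≤ c + 1) : Avoids (rampSeq n k s c) [1,2,0] := by
  rw [avoids_120_iff]
  intro i j l hij hjl h
  rw [Fin.lt_def] at hij hjl
  simp only [rampSeq] at h ⊢
  split_ifs at h ⊢ <;> omega

theorem rampSeq_zero : rampSeq n 0 s 0 = 0 := by
  funext i
  simp [rampSeq]

end rampSeq

theorem exists_first_failure (P : Fin n → Prop) {m : ℕ} (hmn : m ≤ n) :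
    ∃ t, m ≤ t ∧ t ≤ n ∧ (∀ i : Fin n, m ≤ i → (i : ℕ) < t → P i) ∧
      ∀ i : Fin n, (i : ℕ) = t → ¬ P i := by
  classical
  have hn : ∀ i : Fin n, (i : ℕ) = n → ¬ P i := fun i hi => absurd i.isLt (by omega)
  have hex : ∃ t, m ≤ t ∧ ∀ i : Fin n, (i : ℕ) = t → ¬ P i := ⟨n, hmn, hn⟩
  refine ⟨Nat.find hex, (Nat.find_spec hex).1, Nat.find_min' hex ⟨hmn, hn⟩,
    fun i hmi hit => ?_, (Nat.find_spec hex).2⟩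
  obtain ⟨j, hj, hPj⟩ : ∃ j : Fin n, (j : ℕ) = i ∧ P j := by
    simpa [hmi] using Nat.find_min hex hit
  rwa [← Fin.ext hj]

def IsIdPrefix (e : Fin n → ℕ) (m : ℕ) : Prop := ∀ i : Fin n, (i : ℕ) < m → e i = i

theorem InvSeq.exists_isIdPrefix (hI : InvSeq e) :
    ∃ m ≤ n, IsIdPrefix e m ∧ ∀ i : Fin n, (i : ℕ) = m → e i < m := by
  obtain ⟨m, -, hmn, hpre, hdev⟩ := exists_first_failure (fun i => e i = i) (Nat.zero_le n)
  exact ⟨m, hmn, fun i => hpre i (Nat.zero_le _),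
    fun i hi => hi ▸ lt_of_le_of_ne (hI i) (hdev i hi)⟩

section IsIdPrefix

variable {m : ℕ}

theorem IsIdPrefix.exists_lt_eq (hpre : IsIdPrefix e m) {j : Fin n} (hj : m ≤ j) (hjm : e j < m) :
    ∃ v < j, e v = e j :=
  ⟨⟨e j, by omega⟩, Fin.mk_lt_of_lt_val (by omega), hpre _ hjm⟩

theorem IsIdPrefix.le_of_avoids_001 (hpre : IsIdPrefix e m) (h001 : Avoids e [0,0,1])
    {j l : Fin n} (hj : m ≤ j) (hjm : e j < m) (hjl : j ≤ l) : e l ≤ e j := by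
  rcases hjl.eq_or_lt with rfl | hjl
  · exact le_rfl
  obtain ⟨v, hvj, hv⟩ := hpre.exists_lt_eq hj hjm
  exact hv ▸ avoids_001_iff.1 h001 v j l hvj hjl hv

theorem IsIdPrefix.eq_rampSeq (hpre : IsIdPrefix e m) (h001 : Avoids e [0,0,1]) (hmn : m ≤ n)
    {c : ℕ} (hlt : ∀ i : Fin n, m ≤ i → e i < m)
    (htail : ∀ i : Fin n, m ≤ i → e i = c ∨ e i = m - 1) :
    ∃ s, m ≤ s ∧ s ≤ n ∧ e = rampSeq n (m - 1) s c := by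
  obtain ⟨s, hms, hsn, hrun, hend⟩ := exists_first_failure (fun i => e i = m - 1) hmn
  refine ⟨s, hms, hsn, funext fun i => ?_⟩
  simp only [rampSeq]
  rcases lt_or_ge (i : ℕ) m with him | hmi
  · rw [if_pos (by omega), hpre i him]
    omega
  rcases lt_or_ge (i : ℕ) s with his | hsi
  · rw [if_pos his, hrun i hmi his]
    omega
  rw [if_neg (by omega)]
  let t : Fin n := ⟨s, by omega⟩
  have htc : e t = c := (htail t hms).resolve_right (hend t rfl)
  have htm : e t < m := hlt t hms
  have hit : e i ≤ e t := hpre.le_of_avoids_001 h001 hms htm hsi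
  have := hend t rfl
  have := htail i hmi
  omega

end IsIdPrefix

theorem InvSeq.eq_rampSeq_of_avoids_001_110 (hI : InvSeq e) (h001 : Avoids e [0,0,1])
    (h110 : Avoids e [1,1,0]) :
    e = rampSeq n n n 0 ∨ ∃ x < n, ∃ y < x, rampSeq n x x y = e := by
  obtain ⟨m, hmn, hpre, hdev⟩ := hI.exists_isIdPrefix
  rcases hmn.lt_or_eq with hm | rfl
  · right
    let j : Fin n := ⟨m, hm⟩
    have hjm : e j < m := hdev j rfl
    obtain ⟨v, hvj, hv⟩ := hpre.exists_lt_eq le_rfl hjm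
    refine ⟨m, hm, e j, hjm, funext fun i => ?_⟩
    simp only [rampSeq]
    rcases lt_or_ge (i : ℕ) m with him | hmi
    · rw [if_pos him, hpre i him]
      omega
    rw [if_neg (by omega)]
    have hle : e i ≤ e j := hpre.le_of_avoids_001 h001 le_rfl hjm hmi
    rcases (show j ≤ i from hmi).eq_or_lt with rfl | hji
    · rfl
    have := avoids_110_iff.1 h110 v j i hvj hji hv
    omega
  · left
    funext i
    simp [rampSeq, hpre i i.isLt]

-- The pair `y < x` encodes the identity prefix length `m = y + 2` and the drop position
-- `s = x + 1`; `m ≤ 1` gives the zero sequence.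
theorem InvSeq.eq_zero_or_rampSeq_of_two_valued_tail (hI : InvSeq e)
    (h001 : Avoids e [0,0,1]) (lo : ℕ → ℕ)
    (htail : ∀ m, IsIdPrefix e m → ∀ i : Fin n, m ≤ i → e i < m → e i = lo m ∨ e i = m - 1) :
    e = 0 ∨ ∃ x < n, ∃ y < x, rampSeq n (y + 1) (x + 1) (lo (y + 2)) = e := by
  obtain ⟨m, hmn, hpre, hdev⟩ := hI.exists_isIdPrefix
  have hlt : ∀ i : Fin n, m ≤ i → e i < m := fun i hmi =>
    have hjm := hdev ⟨m, by omega⟩ rfl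
    (hpre.le_of_avoids_001 h001 le_rfl hjm hmi).trans_lt hjm
  obtain ⟨s, hms, hsn, he⟩ :=
    hpre.eq_rampSeq h001 hmn hlt fun i hmi => htail m hpre i hmi (hlt i hmi)
  rcases le_or_gt m 1 with hm | hm
  · left
    funext i
    show e i = 0
    rcases lt_or_ge (i : ℕ) m with him | hmi
    · have := hpre i him
      omega
    · have := hlt i hmi
      omega
  · right
    refine ⟨s - 1, by omega, m - 2, by omega, ?_⟩
    rw [he, show m - 2 + 1 = m - 1 by omega, show s - 1 + 1 = s by omega,
      show m - 2 + 2 = m by omega]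

theorem InvSeq.eq_zero_or_rampSeq_of_avoids_001_021 (hI : InvSeq e) (h001 : Avoids e [0,0,1])
    (h021 : Avoids e [0,2,1]) :
    e = 0 ∨ ∃ x < n, ∃ y < x, rampSeq n (y + 1) (x + 1) 0 = e := by
  refine hI.eq_zero_or_rampSeq_of_two_valued_tail h001 (fun _ => 0) fun m hpre i hmi him => ?_
  by_contra! h
  have h0 : e ⟨0, by omega⟩ = 0 := hpre _ (show 0 < m by omega)
  have htop : e ⟨m - 1, by omega⟩ = m - 1 := hpre _ (show m - 1 < m by omega)
  have := avoids_021_iff.1 h021 ⟨0, by omega⟩ ⟨m - 1, by omega⟩ i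
    (Fin.mk_lt_mk.2 (by omega)) (Fin.mk_lt_of_lt_val (by omega)) (by omega)
  omega

theorem InvSeq.eq_zero_or_rampSeq_of_avoids_001_120 (hI : InvSeq e) (h001 : Avoids e [0,0,1])
    (h120 : Avoids e [1,2,0]) :
    e = 0 ∨ ∃ x < n, ∃ y < x, rampSeq n (y + 1) (x + 1) y = e := by
  have key := hI.eq_zero_or_rampSeq_of_two_valued_tail h001 (fun m => m - 2)
    fun m hpre i hmi him => by
      by_contra! h
      have hbot : e ⟨m - 2, by omega⟩ = m - 2 := hpre _ (show m - 2 < m by omega)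
      have htop : e ⟨m - 1, by omega⟩ = m - 1 := hpre _ (show m - 1 < m by omega)
      have := avoids_120_iff.1 h120 ⟨m - 2, by omega⟩ ⟨m - 1, by omega⟩ i
        (Fin.mk_lt_mk.2 (by omega)) (Fin.mk_lt_of_lt_val (by omega)) (by omega)
      omega
  simpa using key

theorem card_avoids_001_110 (n : ℕ) :
    Nat.card {e : Fin n → ℕ // InvSeq e ∧ Avoids e [0,0,1] ∧ Avoids e [1,1,0]} =
      n * (n - 1) / 2 + 1 := by
  refine natCard_eq_triangle_add_one (rampSeq n n n 0) (fun x y => rampSeq n x x y)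
    (fun e => ⟨fun ⟨hI, h001, h110⟩ => hI.eq_rampSeq_of_avoids_001_110 h001 h110, ?_⟩) ?_ ?_
  · rintro (rfl | ⟨x, -, y, hy, rfl⟩)
    · exact ⟨rampSeq_invSeq (Nat.zero_le n), rampSeq_avoids_001 (Nat.zero_le n),
        rampSeq_avoids_110 (Nat.le_succ n)⟩
    · exact ⟨rampSeq_invSeq hy.le, rampSeq_avoids_001 hy.le, rampSeq_avoids_110 (Nat.le_succ x)⟩
  · intro x hx y hy h
    have := congrFun h ⟨x, hx⟩
    simp only [rampSeq] at this
    split_ifs at this <;> omega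
  · intro x hx y hy x' hx' y' hy' h
    have h1 := congrFun h ⟨x, hx⟩
    have h2 := congrFun h ⟨x', hx'⟩
    simp only [rampSeq] at h1 h2
    split_ifs at h1 h2 <;> omega

theorem card_avoids_001_021 (n : ℕ) :
    Nat.card {e : Fin n → ℕ // InvSeq e ∧ Avoids e [0,0,1] ∧ Avoids e [0,2,1]} =
      n * (n - 1) / 2 + 1 := by
  refine natCard_eq_triangle_add_one 0 (fun x y => rampSeq n (y + 1) (x + 1) 0)
    (fun e => ⟨fun ⟨hI, h001, h021⟩ => hI.eq_zero_or_rampSeq_of_avoids_001_021 h001 h021, ?_⟩)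
    ?_ ?_
  · rintro (rfl | ⟨x, -, y, hy, rfl⟩)
    · rw [← rampSeq_zero (s := 0)]
      exact ⟨rampSeq_invSeq le_rfl, rampSeq_avoids_001 le_rfl, rampSeq_avoids_021⟩
    · exact ⟨rampSeq_invSeq (Nat.zero_le _), rampSeq_avoids_001 (Nat.zero_le _),
        rampSeq_avoids_021⟩
  · intro x hx y hy h
    have := congrFun h ⟨x, hx⟩
    simp only [rampSeq, Pi.zero_apply] at this
    split_ifs at this <;> omega
  · intro x hx y hy x' hx' y' hy' h
    have h1 := congrFun h ⟨x, hx⟩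
    have h2 := congrFun h ⟨x', hx'⟩
    simp only [rampSeq] at h1 h2
    split_ifs at h1 h2 <;> omega

theorem card_avoids_001_120 (n : ℕ) :
    Nat.card {e : Fin n → ℕ // InvSeq e ∧ Avoids e [0,0,1] ∧ Avoids e [1,2,0]} =
      n * (n - 1) / 2 + 1 := by
  refine natCard_eq_triangle_add_one 0 (fun x y => rampSeq n (y + 1) (x + 1) y)
    (fun e => ⟨fun ⟨hI, h001, h120⟩ => hI.eq_zero_or_rampSeq_of_avoids_001_120 h001 h120, ?_⟩)
    ?_ ?_
  · rintro (rfl | ⟨x, -, y, hy, rfl⟩)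
    · rw [← rampSeq_zero (s := 0)]
      exact ⟨rampSeq_invSeq le_rfl, rampSeq_avoids_001 le_rfl, rampSeq_avoids_120 (Nat.zero_le _)⟩
    · exact ⟨rampSeq_invSeq (by omega), rampSeq_avoids_001 (Nat.le_succ y),
        rampSeq_avoids_120 le_rfl⟩
  · intro x hx y hy h
    have := congrFun h ⟨x, hx⟩
    simp only [rampSeq, Pi.zero_apply] at this
    split_ifs at this <;> omega
  · intro x hx y hy x' hx' y' hy' h
    have h1 := congrFun h ⟨x, hx⟩
    have h2 := congrFun h ⟨x', hx'⟩
    simp only [rampSeq] at h1 h2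
    split_ifs at h1 h2 <;> omega

theorem stmt_1_general (n : ℕ) (p q : List ℕ)
    (hpq : (p, q) = ([0,0,1], [1,1,0]) ∨ (p, q) = ([0,0,1], [0,2,1]) ∨
           (p, q) = ([0,0,1], [1,2,0])) :
    Nat.card {e : Fin n → ℕ // InvSeq e ∧ Avoids e p ∧ Avoids e q}
      = n * (n - 1) / 2 + 1 := by
  rcases hpq with h | h | h <;> obtain ⟨rfl, rfl⟩ := Prod.mk.inj h
  · exact card_avoids_001_110 n
  · exact card_avoids_001_021 n
  · exact card_avoids_001_120 n

theorem stmt_1 (n : ℕ) (hn : 1 ≤ n) (p q : List ℕ)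
    (hpq : (p, q) = ([0,0,1], [1,1,0]) ∨ (p, q) = ([0,0,1], [0,2,1]) ∨
           (p, q) = ([0,0,1], [1,2,0])) :
    Nat.card {e : Fin n → ℕ // InvSeq e ∧ Avoids e p ∧ Avoids e q}
      = n * (n - 1) / 2 + 1 :=
  stmt_1_general n p q hpq
end
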